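/- Let k be a field, let m, p ≥ 1 and n = m + p, and assume (n−1)! ≠ 0 in k. Let f : Fin m → Polynomial k be linearly independent over k with each f i of degree < n, and let s : Fin (m*p) → k be pairwise distinct scalars. Then there exists a nonzero c ∈ k such that Wr(f) = c • ∏_{i ∈ Fin (m*p)} (X − C (s i)) if and only if for every i ∈ Fin (m*p), the k-span of {f 0, …, f (m−1)} intersects E_p(s i) nontrivially. -/

import Mathlib

open Polynomial

/-- The Wronskian of a family `f : Fin m → Polynomial k`. -/
noncomputable def Wr {k : Type*} [Field k] {m : ℕ} (f : Fin m → Polynomial k) : Polynomial k :=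
  Matrix.det (Matrix.of fun i j : Fin m => Polynomial.derivative^[(i : ℕ)] (f j))

/-- The plane `E_p(s)`: the span of `(X - C s)^j` for `m ≤ j ≤ m + p - 1`. -/
noncomputable def Eplane {k : Type*} [Field k] (m p : ℕ) (s : k) : Submodule k (Polynomial k) :=
  Submodule.span k
    ((fun j : ℕ => (Polynomial.X - Polynomial.C s) ^ j) '' {j | m ≤ j ∧ j ≤ m + p - 1})

/-!
For `deg g < m + p`, `g ∈ E_p(s)` iff `(X - s)^m ∣ g`, and since `(m - 1)! ≠ 0` this holds iff
the derivatives of `g` of order `< m` vanish at `s`. Hence a nonzero `∑ v j • f j` in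
`span f ∩ E_p(s)` is a nonzero kernel vector `v` of the Wronskian matrix evaluated at `s`: the
planes `E_p(s)` met by `span f` are exactly the roots of `Wr f`.

So it suffices that `Wr f ≠ 0` and `deg Wr f ≤ mp`, since then `mp` distinct roots force
`Wr f = c • ∏ (X - s i)`. A change of basis of `span f` scales `Wr f` by a nonzero constant, and
`span f` has a basis with distinct degrees `d j < n`. After multiplying row `i` of the Wronskian
matrix by `X ^ i`, column `j` has degree `≤ d j`, and the coefficient of `X ^ (∑ d j)` in the
determinant is `∏ lc (f j)` times the Vandermonde determinant of the `d j`, nonzero because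
`(n - 1)! ≠ 0`. Thus `deg Wr f = ∑ d j - m(m-1)/2 ≤ mp`.
-/

open Finset in
theorem Finset.sum_range_card_le_sum (s : Finset ℕ) : ∑ i ∈ range #s, i ≤ ∑ x ∈ s, x := by
  induction s using Finset.induction_on_max with
  | empty => simp
  | insert a s ha ih =>
    have has : a ∉ s := fun h => lt_irrefl a (ha a h)
    have hcard : #s ≤ a := by
      simpa using card_le_card (fun x hx => mem_range.mpr (ha x hx) : s ⊆ range a)
    rw [card_insert_of_notMem has, sum_range_succ, sum_insert has]
    omega

theorem Nat.sum_le_mul_add_sum_of_injective {m p : ℕ} (d : Fin m → ℕ) (hd : Function.Injective d)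
    (hlt : ∀ j, d j < m + p) : ∑ j, d j ≤ m * p + ∑ i : Fin m, (i : ℕ) := by
  have hrefl : Function.Injective fun j => m + p - 1 - d j := fun a b hab => by
    have := hlt a; have := hlt b; exact hd (by simp only at hab; omega)
  have hT : ∑ i : Fin m, (i : ℕ) ≤ ∑ j, (m + p - 1 - d j) := by
    simpa [Finset.sum_image fun a _ b _ h => hrefl h, Finset.card_image_of_injective _ hrefl,
      Finset.sum_range] using
      Finset.sum_range_card_le_sum (Finset.univ.image fun j => m + p - 1 - d j)
  have hsum : ∑ j, d j + ∑ j, (m + p - 1 - d j) = m * (m + p - 1) := by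
    rw [← Finset.sum_add_distrib,
      Finset.sum_congr rfl fun j _ => Nat.add_sub_of_le (Nat.le_sub_one_of_lt (hlt j))]
    simp
  have h2T : (∑ i : Fin m, (i : ℕ)) * 2 = m * (m - 1) := by
    rw [Fin.sum_univ_eq_sum_range (fun i => i), Finset.sum_range_id_mul_two]
  have hmul : m * (m + p - 1) = m * p + m * (m - 1) := by
    rcases m with _ | m
    · simp
    · rw [show m + 1 + p - 1 = p + m by omega, Nat.add_sub_cancel]; ring
  omega

theorem Nat.cast_injOn_Iio_of_factorial_ne_zero {R : Type*} [Ring R] {n : ℕ}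
    (h : ((n - 1).factorial : R) ≠ 0) : Set.InjOn (Nat.cast : ℕ → R) (Set.Iio n) := by
  suffices ∀ a b : ℕ, a < b → b < n → (a : R) ≠ b by
    intro a ha b hb hab
    by_contra hne
    rcases lt_or_gt_of_ne hne with hlt | hlt
    exacts [this a b hlt hb hab, this b a hlt ha hab.symm]
  intro a b hab hb heq
  have hdvd : ((b - a : ℕ) : R) ∣ ((n - 1).factorial : R) :=
    Nat.cast_dvd_cast (Nat.dvd_factorial (by omega) (by omega))
  rw [Nat.cast_sub hab.le, heq, sub_self, zero_dvd_iff] at hdvd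
  exact h hdvd

theorem Nat.cast_factorial_ne_zero_of_le {R : Type*} [Semiring R] {a b : ℕ} (hab : a ≤ b)
    (h : (b.factorial : R) ≠ 0) : (a.factorial : R) ≠ 0 := fun ha =>
  h (zero_dvd_iff.mp (ha ▸ Nat.cast_dvd_cast (Nat.factorial_dvd_factorial hab)))

namespace Polynomial

variable {R : Type*} [CommRing R]

theorem coeff_prod_of_natDegree_le_sum {ι : Type*} (s : Finset ι) (q : ι → R[X]) (t : ι → ℕ)
    (h : ∀ i ∈ s, (q i).natDegree ≤ t i) :
    (∏ i ∈ s, q i).coeff (∑ i ∈ s, t i) = ∏ i ∈ s, (q i).coeff (t i) := by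
  induction s using Finset.cons_induction with
  | empty => simp
  | cons a s ha ih =>
    have hs : ∀ i ∈ s, (q i).natDegree ≤ t i := fun i hi => h i (Finset.mem_cons_of_mem hi)
    rw [Finset.prod_cons, Finset.sum_cons, Finset.prod_cons, ← ih hs,
      coeff_mul_add_eq_of_natDegree_le (h a (Finset.mem_cons_self a s))
        ((natDegree_prod_le _ _).trans (Finset.sum_le_sum hs))]

theorem coeff_X_pow_mul_iterate_derivative (p : R[X]) (i d : ℕ) :
    (X ^ i * derivative^[i] p).coeff d = d.descFactorial i • p.coeff d := by
  rw [coeff_X_pow_mul']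
  split_ifs with hid
  · rw [coeff_iterate_derivative, Nat.sub_add_cancel hid]
  · rw [Nat.descFactorial_eq_zero_iff_lt.mpr (not_le.mp hid), zero_smul]

theorem natDegree_X_pow_mul_iterate_derivative_le (p : R[X]) (i : ℕ) :
    (X ^ i * derivative^[i] p).natDegree ≤ p.natDegree :=
  natDegree_le_iff_coeff_eq_zero.mpr fun d hd => by
    rw [coeff_X_pow_mul_iterate_derivative, coeff_eq_zero_of_natDegree_lt hd, smul_zero]

theorem pow_X_sub_C_dvd_iff_isRoot_iterate_derivative [IsDomain R] {p : R[X]} {s : R} {m : ℕ}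
    (h : ((m - 1).factorial : R) ≠ 0) :
    (X - C s) ^ m ∣ p ↔ ∀ i < m, (derivative^[i] p).IsRoot s := by
  rcases eq_or_ne p 0 with rfl | hp
  · simp
  rcases m with _ | m
  · simp
  rw [← le_rootMultiplicity_iff hp, Nat.succ_le_iff,
    lt_rootMultiplicity_iff_isRoot_iterate_derivative_of_mem_nonZeroDivisors hp
      (mem_nonZeroDivisors_of_ne_zero (by simpa using h))]
  simp only [Nat.lt_succ_iff]

theorem eq_leadingCoeff_smul_prod_X_sub_C [IsDomain R] {ι : Type*} [Fintype ι] {p : R[X]}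
    (hp : p ≠ 0) (hdeg : p.natDegree ≤ Fintype.card ι) {s : ι → R} (hs : Function.Injective s)
    (hroot : ∀ i, p.IsRoot (s i)) :
    p = p.leadingCoeff • ∏ i, (X - C (s i)) := by
  set t : Multiset R := Finset.univ.val.map s
  have hle : t ≤ p.roots := (Multiset.le_iff_subset (Finset.univ.nodup.map hs)).mpr fun a ha => by
    obtain ⟨i, -, rfl⟩ := Multiset.mem_map.mp ha
    exact (mem_roots hp).mpr (hroot i)
  have hcard : Multiset.card t = Fintype.card ι := by simp [t]
  have hroots : t = p.roots :=
    Multiset.eq_of_le_of_card_le hle (hcard ▸ (card_roots' p).trans hdeg)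
  conv_lhs => rw [← C_leadingCoeff_mul_prod_multiset_X_sub_C
    ((card_roots' p).antisymm (hroots ▸ hcard ▸ hdeg)), ← hroots]
  simp [t, smul_eq_C_mul]

end Polynomial

namespace Matrix

open Polynomial

variable {R : Type*} [CommRing R] {n : Type*} [Fintype n] [DecidableEq n]

theorem natDegree_det_le_of_natDegree_le (M : Matrix n n R[X]) (d : n → ℕ)
    (h : ∀ i j, (M i j).natDegree ≤ d j) : M.det.natDegree ≤ ∑ j, d j := by
  rw [det_apply]
  refine natDegree_sum_le_of_forall_le _ _ fun σ _ => ?_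
  refine (natDegree_smul_le _ _).trans ?_
  exact (natDegree_prod_le _ _).trans (Finset.sum_le_sum fun j _ => h (σ j) j)

theorem coeff_det_of_natDegree_le (M : Matrix n n R[X]) (d : n → ℕ)
    (h : ∀ i j, (M i j).natDegree ≤ d j) :
    M.det.coeff (∑ j, d j) = (of fun i j => (M i j).coeff (d j)).det := by
  simp only [det_apply, finsetSum_coeff, coeff_smul, of_apply]
  refine Finset.sum_congr rfl fun σ _ => ?_
  rw [coeff_prod_of_natDegree_le_sum _ _ _ fun j _ => h (σ j) j]

theorem det_descFactorial_eq_det_vandermonde [IsDomain R] {m : ℕ} (d : Fin m → ℕ) :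
    (of fun i j : Fin m => ((d j).descFactorial i : R)).det =
      (vandermonde fun j => (d j : R)).det := by
  rw [det_eval_matrixOfPolynomials_eq_det_vandermonde _ (fun i => descPochhammer R i)
    (fun i => descPochhammer_natDegree R i) (fun i => monic_descPochhammer R i),
    ← det_transpose]
  congr 1
  ext i j
  simp [descPochhammer_eval_eq_descFactorial]

end Matrix

section Wronskian

variable {k : Type*} [Field k]

theorem degree_lt_of_mem_span {ι : Type*} {f : ι → k[X]} {n : ℕ} (hf : ∀ i, (f i).degree < n)
    {q : k[X]} (hq : q ∈ Submodule.span k (Set.range f)) : q.degree < n :=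
  mem_degreeLT.mp <|
    Submodule.span_le.mpr (Set.range_subset_iff.mpr fun i => mem_degreeLT.mpr (hf i)) hq

theorem pow_X_sub_C_dvd_of_mem_Eplane {m p : ℕ} {s : k} {g : k[X]} (hg : g ∈ Eplane m p s) :
    (X - C s) ^ m ∣ g := by
  have hle : Eplane m p s ≤ (Ideal.span {(X - C s) ^ m}).restrictScalars k := by
    rw [Eplane, Submodule.span_le]
    rintro _ ⟨j, ⟨hmj, -⟩, rfl⟩
    exact Ideal.mem_span_singleton.mpr (pow_dvd_pow _ hmj)
  exact Ideal.mem_span_singleton.mp (hle hg)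

theorem mem_Eplane_of_pow_X_sub_C_dvd {m p : ℕ} {s : k} {g : k[X]} (hdvd : (X - C s) ^ m ∣ g)
    (hdeg : g.degree < ↑(m + p)) : g ∈ Eplane m p s := by
  obtain ⟨q, rfl⟩ := hdvd
  rcases eq_or_ne q 0 with rfl | hq
  · simp
  have hpow : (X - C s) ^ m ≠ 0 := pow_ne_zero m (X_sub_C_ne_zero s)
  have hqdeg : q.natDegree < p := by
    have := (natDegree_lt_iff_degree_lt (mul_ne_zero hpow hq)).mpr hdeg
    rw [natDegree_mul hpow hq, natDegree_pow, natDegree_X_sub_C] at this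
    omega
  -- expand `q` in powers of `X - C s`
  rw [← sum_taylor_eq q s, Polynomial.sum, Finset.mul_sum]
  refine Submodule.sum_mem _ fun j hj => ?_
  have hj : j < p := (le_natDegree_of_mem_supp j hj).trans_lt (by rwa [natDegree_taylor])
  rw [mul_left_comm, ← pow_add, ← smul_eq_C_mul]
  exact Submodule.smul_mem _ _ (Submodule.subset_span ⟨m + j, ⟨by omega, by omega⟩, rfl⟩)

theorem mem_Eplane_iff {m p : ℕ} {s : k} {g : k[X]} (hdeg : g.degree < ↑(m + p)) :
    g ∈ Eplane m p s ↔ (X - C s) ^ m ∣ g :=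
  ⟨pow_X_sub_C_dvd_of_mem_Eplane, fun h => mem_Eplane_of_pow_X_sub_C_dvd h hdeg⟩

theorem eval_Wr {m : ℕ} (f : Fin m → k[X]) (s : k) :
    (Wr f).eval s = (Matrix.of fun i j : Fin m => (derivative^[i] (f j)).eval s).det :=
  (evalRingHom s).map_det _

theorem isRoot_Wr_iff {m : ℕ} (f : Fin m → k[X]) (s : k) :
    (Wr f).IsRoot s ↔
      ∃ v : Fin m → k, v ≠ 0 ∧ ∀ i : Fin m, (derivative^[i] (∑ j, v j • f j)).IsRoot s := by
  simp_rw [IsRoot.def, eval_Wr, ← Matrix.exists_mulVec_eq_zero_iff, _root_.funext_iff]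
  simp [Matrix.mulVec, dotProduct, iterate_derivative_sum, eval_finsetSum, mul_comm]

theorem isRoot_Wr_iff_exists_pow_X_sub_C_dvd {m : ℕ} (f : Fin m → k[X]) (s : k)
    (h : ((m - 1).factorial : k) ≠ 0) :
    (Wr f).IsRoot s ↔ ∃ v : Fin m → k, v ≠ 0 ∧ (X - C s) ^ m ∣ ∑ j, v j • f j := by
  simp_rw [isRoot_Wr_iff, pow_X_sub_C_dvd_iff_isRoot_iterate_derivative h, Fin.forall_iff]

theorem span_inf_Eplane_ne_bot_iff {m p : ℕ} {f : Fin m → k[X]} (hli : LinearIndependent k f)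
    (hf : ∀ j, (f j).degree < ↑(m + p)) (s : k) :
    Submodule.span k (Set.range f) ⊓ Eplane m p s ≠ ⊥ ↔
      ∃ v : Fin m → k, v ≠ 0 ∧ (X - C s) ^ m ∣ ∑ j, v j • f j := by
  have hdeg (v : Fin m → k) : (∑ j, v j • f j).degree < ↑(m + p) :=
    degree_lt_of_mem_span hf ((Submodule.mem_span_range_iff_exists_fun k).mpr ⟨v, rfl⟩)
  simp_rw [Submodule.ne_bot_iff, Submodule.mem_inf, Submodule.mem_span_range_iff_exists_fun]
  constructor
  · rintro ⟨_, ⟨⟨v, rfl⟩, hE⟩, hne⟩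
    exact ⟨v, fun hv => hne (by simp [hv]), (mem_Eplane_iff (hdeg v)).mp hE⟩
  · rintro ⟨v, hv, hdvd⟩
    exact ⟨_, ⟨⟨v, rfl⟩, (mem_Eplane_iff (hdeg v)).mpr hdvd⟩,
      fun h => hv (_root_.funext (Fintype.linearIndependent_iff.mp hli v h))⟩

open Matrix in
theorem Wr_sum_smul {m : ℕ} (f : Fin m → k[X]) (A : Matrix (Fin m) (Fin m) k) :
    Wr (fun j => ∑ i, A i j • f i) = C A.det * Wr f := by
  have hmat : (of fun i j : Fin m => derivative^[i] (∑ l, A l j • f l)) =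
      (of fun i j : Fin m => derivative^[i] (f j)) * A.map C := by
    refine Matrix.ext fun i j => ?_
    simp only [of_apply, mul_apply, map_apply, iterate_derivative_sum, smul_eq_C_mul]
    exact Finset.sum_congr rfl fun _ _ => by rw [iterate_derivative_C_mul, mul_comm]
  rw [Wr, hmat, det_mul, ← RingHom.mapMatrix_apply, ← RingHom.map_det, mul_comm, Wr]

open Matrix in
theorem Wr_ne_zero_and_natDegree_add_le_of_injective {m : ℕ} {g : Fin m → k[X]}
    (hg : ∀ j, g j ≠ 0) (hinj : Function.Injective fun j => ((g j).natDegree : k)) :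
    Wr g ≠ 0 ∧ (Wr g).natDegree + ∑ i : Fin m, (i : ℕ) ≤ ∑ j, (g j).natDegree := by
  set N : Matrix (Fin m) (Fin m) k[X] := of fun i j => X ^ (i : ℕ) * derivative^[i] (g j)
  have hN : N.det = X ^ (∑ i : Fin m, (i : ℕ)) * Wr g := by
    rw [show N = diagonal (fun i : Fin m => X ^ (i : ℕ)) *
        of fun i j : Fin m => derivative^[i] (g j) by ext; simp [N, diagonal_mul],
      det_mul, det_diagonal, Finset.prod_pow_eq_pow_sum, Wr]
  have hdeg : ∀ i j, (N i j).natDegree ≤ (g j).natDegree := fun i j =>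
    natDegree_X_pow_mul_iterate_derivative_le _ _
  have hcoeff : N.det.coeff (∑ j, (g j).natDegree) ≠ 0 := by
    simp_rw [coeff_det_of_natDegree_le N _ hdeg, N, of_apply, coeff_X_pow_mul_iterate_derivative,
      coeff_natDegree, nsmul_eq_mul, mul_comm _ (leadingCoeff _)]
    have hrow := det_mul_row (fun j => (g j).leadingCoeff)
      (of fun i j : Fin m => ((g j).natDegree.descFactorial i : k))
    simp only [of_apply] at hrow
    rw [hrow, det_descFactorial_eq_det_vandermonde]
    exact mul_ne_zero (Finset.prod_ne_zero_iff.mpr fun j _ => leadingCoeff_ne_zero.mpr (hg j))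
      (det_vandermonde_ne_zero_iff.mpr hinj)
  have hW : Wr g ≠ 0 := fun h => hcoeff (by rw [hN, h, mul_zero, coeff_zero])
  refine ⟨hW, ?_⟩
  have := natDegree_det_le_of_natDegree_le N _ hdeg
  rwa [hN, natDegree_mul (pow_ne_zero _ X_ne_zero) hW, natDegree_X_pow, add_comm] at this

theorem exists_mem_span_injective_natDegree {ι : Type*} [Fintype ι] {f : ι → k[X]}
    (hli : LinearIndependent k f) {n : ℕ} (hf : ∀ i, (f i).degree < n) :
    ∃ g : ι → k[X], (∀ j, g j ∈ Submodule.span k (Set.range f)) ∧ (∀ j, g j ≠ 0) ∧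
      Function.Injective fun j => (g j).natDegree := by
  classical
  set V := Submodule.span k (Set.range f)
  set D : Finset ℕ := (Finset.range n).filter fun d => ∃ q ∈ V, q ≠ 0 ∧ q.natDegree = d
  set Φ : k[X] →ₗ[k] (D → k) := LinearMap.pi fun d => lcoeff k d
  -- `Φ` is injective on `V`: a nonzero `q ∈ V` has its leading coefficient in a degree from `D`
  have hΦ : Disjoint V (LinearMap.ker Φ) := by
    refine Submodule.disjoint_def.mpr fun q hq hΦq => by_contra fun hq0 => hq0 ?_
    have hd : q.natDegree ∈ D := Finset.mem_filter.mpr ⟨Finset.mem_range.mpr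
      ((natDegree_lt_iff_degree_lt hq0).mpr (degree_lt_of_mem_span hf hq)), q, hq, hq0, rfl⟩
    exact leadingCoeff_eq_zero.mp (congrFun (LinearMap.mem_ker.mp hΦq) ⟨_, hd⟩)
  have hcard : Fintype.card ι ≤ Fintype.card D := by
    simpa using (hli.map hΦ).fintype_card_le_finrank
  obtain ⟨e⟩ := Function.Embedding.nonempty_of_card_le hcard
  choose q hqV hq0 hqd using fun d : D => (Finset.mem_filter.mp d.2).2
  exact ⟨fun j => q (e j), fun j => hqV _, fun j => hq0 _,
    fun a b h => e.injective (Subtype.ext (by simpa [hqd] using h))⟩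

theorem Wr_ne_zero_and_natDegree_le {m p : ℕ} {f : Fin m → k[X]} (hli : LinearIndependent k f)
    (hf : ∀ j, (f j).degree < ↑(m + p)) (hfac : ((m + p - 1).factorial : k) ≠ 0) :
    Wr f ≠ 0 ∧ (Wr f).natDegree ≤ m * p := by
  obtain ⟨g, hgV, hg0, hginj⟩ := exists_mem_span_injective_natDegree hli hf
  choose A hA using fun j => (Submodule.mem_span_range_iff_exists_fun k).mp (hgV j)
  have hWg : Wr g = C (Matrix.of fun i j => A j i).det * Wr f := by
    rw [← Wr_sum_smul]
    exact congrArg Wr (funext fun j => (hA j).symm)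
  have hglt : ∀ j, (g j).natDegree < m + p := fun j =>
    (natDegree_lt_iff_degree_lt (hg0 j)).mpr (degree_lt_of_mem_span hf (hgV j))
  obtain ⟨hWg0, hWgdeg⟩ := Wr_ne_zero_and_natDegree_add_le_of_injective hg0 fun a b h =>
    hginj (Nat.cast_injOn_Iio_of_factorial_ne_zero hfac (hglt a) (hglt b) h)
  rw [hWg] at hWg0 hWgdeg
  obtain ⟨hdet, hWf0⟩ := mul_ne_zero_iff.mp hWg0
  rw [natDegree_C_mul (by simpa using hdet)] at hWgdeg
  have := Nat.sum_le_mul_add_sum_of_injective _ hginj hglt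
  exact ⟨hWf0, by omega⟩

end Wronskian

theorem wronskian_eq_prod_iff_meets_all_Eplanes_general {k : Type*} [Field k] (m p n : ℕ)
    (hn : n = m + p)
    (hfac : ((Nat.factorial (n - 1) : k) ≠ 0))
    (f : Fin m → Polynomial k) (hli : LinearIndependent k f)
    (hf : ∀ i, (f i).degree < n)
    (s : Fin (m * p) → k) (hs : Function.Injective s) :
    (∃ c : k, c ≠ 0 ∧
        Wr f = c • ∏ i : Fin (m * p), (Polynomial.X - Polynomial.C (s i))) ↔
      ∀ i : Fin (m * p), Submodule.span k (Set.range f) ⊓ Eplane m p (s i) ≠ ⊥ := by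
  subst hn
  have hmeets (t : k) : Submodule.span k (Set.range f) ⊓ Eplane m p t ≠ ⊥ ↔ (Wr f).IsRoot t :=
    (span_inf_Eplane_ne_bot_iff hli hf t).trans (isRoot_Wr_iff_exists_pow_X_sub_C_dvd f t
      (Nat.cast_factorial_ne_zero_of_le (by omega) hfac)).symm
  simp_rw [hmeets]
  constructor
  · rintro ⟨c, -, hW⟩ i
    simp [hW, eval_prod, Finset.prod_eq_zero (Finset.mem_univ i)]
  · intro hroot
    obtain ⟨hW0, hdeg⟩ := Wr_ne_zero_and_natDegree_le hli hf hfac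
    exact ⟨_, leadingCoeff_ne_zero.mpr hW0,
      eq_leadingCoeff_smul_prod_X_sub_C hW0 (by simpa using hdeg) hs hroot⟩

theorem wronskian_eq_prod_iff_meets_all_Eplanes {k : Type*} [Field k] (m p n : ℕ)
    (hm : 1 ≤ m) (hp : 1 ≤ p) (hn : n = m + p)
    (hfac : ((Nat.factorial (n - 1) : k) ≠ 0))
    (f : Fin m → Polynomial k) (hli : LinearIndependent k f)
    (hf : ∀ i, (f i).degree < n)
    (s : Fin (m * p) → k) (hs : Function.Injective s) :
    (∃ c : k, c ≠ 0 ∧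
        Wr f = c • ∏ i : Fin (m * p), (Polynomial.X - Polynomial.C (s i))) ↔
      ∀ i : Fin (m * p), Submodule.span k (Set.range f) ⊓ Eplane m p (s i) ≠ ⊥ :=
  wronskian_eq_prod_iff_meets_all_Eplanes_general m p n hn hfac f hli hf s hs
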